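/- Let $\mathbf{k}$ be an integral domain and $\mathcal{B}$ a $\mathbf{k}$-bialgebra. Let $\mathcal{B}_\infty^\vee$ be the union over $N \geq -1$ of the annihilators of $\mathcal{B}_+^{N+1}$ in $\mathcal{B}^\vee$, where $\mathcal{B}_+ = \ker \epsilon$. Then the set of invertible characters of $\mathcal{B}$ (invertible elements of the convolution monoid of $\mathbf{k}$-algebra homomorphisms $\mathcal{B} \to \mathbf{k}$) is left linearly independent over $\mathcal{B}_\infty^\vee$: if $g_1, \ldots, g_n$ are distinct invertible characters and $p_1, \ldots, p_n \in \mathcal{B}_\infty^\vee$ satisfy $\sum_{i=1}^n p_i \circledast g_i = 0$, then all $p_i = 0$. -/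

import Mathlib

open TensorProduct

variable (k : Type*) [CommRing k] [IsDomain k] (B : Type*) [Ring B] [Bialgebra k B]

/-- The convolution product on the dual `B^∨ = Hom_k(B, k)` of a `k`-bialgebra:
`f ⊛ g = μ_k ∘ (f ⊗ g) ∘ Δ`. -/
noncomputable def conv (f g : B →ₗ[k] k) : B →ₗ[k] k :=
  LinearMap.mul' k k ∘ₗ TensorProduct.map f g ∘ₗ Coalgebra.comul

/-- A linear form `f : B → k` is a character if it is unital and multiplicative
(i.e. a `k`-algebra homomorphism `B → k`). -/
def IsChar (f : B →ₗ[k] k) : Prop :=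
  f 1 = 1 ∧ ∀ x y : B, f (x * y) = f x * f y

/-- An invertible character: a character which is invertible in the convolution monoid
`Ξ(B)` of characters (whose neutral element is the counit `ε`). -/
def IsInvChar (f : B →ₗ[k] k) : Prop :=
  IsChar k B f ∧ ∃ h : B →ₗ[k] k, IsChar k B h ∧
    conv k B f h = Coalgebra.counit ∧ conv k B h f = Coalgebra.counit

/-- The powers `B₊^N` of the augmentation ideal `B₊ = ker ε`, with `B₊^0 = B`. -/
noncomputable def plusPow : ℕ → Submodule k B
  | 0 => ⊤
  | n + 1 => plusPow n * LinearMap.ker (Coalgebra.counit (R := k) (A := B))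

/-- `f` belongs to `B_∞^∨`, i.e. `f` annihilates `B₊^{N+1}` for some `N ≥ -1`. -/
def InDualInfty (f : B →ₗ[k] k) : Prop :=
  ∃ N : ℕ, ∀ x ∈ plusPow k B N, f x = 0

section Aux

-- auxiliary development
def Lev (m : ℕ) (p : B →ₗ[k] k) : Prop := ∀ x ∈ plusPow k B m, p x = 0

noncomputable def D (z : B) (p : B →ₗ[k] k) : B →ₗ[k] k := p ∘ₗ LinearMap.mulRight k z

variable {k B}

lemma D_apply (z : B) (p : B →ₗ[k] k) (x : B) : D k B z p x = p (x * z) := rfl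

lemma plusPow_succ_le (m : ℕ) : plusPow k B (m + 1) ≤ plusPow k B m := by
  induction m with
  | zero => exact le_top
  | succ m ih =>
      show plusPow k B (m+1) * _ ≤ plusPow k B m * _
      exact mul_le_mul' ih le_rfl

lemma plusPow_antitone : Antitone (plusPow k B) :=
  antitone_nat_of_succ_le plusPow_succ_le

lemma lev_mono {m m' : ℕ} (h : m ≤ m') {p : B →ₗ[k] k} (hp : Lev k B m p) :
    Lev k B m' p := fun x hx => hp x (plusPow_antitone h hx)

lemma lev_zero {p : B →ₗ[k] k} (hp : Lev k B 0 p) : p = 0 := by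
  ext x; exact hp x trivial

lemma lev_zero_map (m : ℕ) : Lev k B m (0 : B →ₗ[k] k) := fun x _ => rfl

lemma lev_add {m : ℕ} {p q : B →ₗ[k] k} (hp : Lev k B m p) (hq : Lev k B m q) :
    Lev k B m (p + q) := fun x hx => by
  simp [hp x hx, hq x hx]

lemma lev_smul {m : ℕ} (c : k) {p : B →ₗ[k] k} (hp : Lev k B m p) :
    Lev k B m (c • p) := fun x hx => by simp [hp x hx]

lemma lev_D {m : ℕ} {z : B} (hz : Coalgebra.counit (R := k) z = 0) {p : B →ₗ[k] k}
    (hp : Lev k B (m + 1) p) : Lev k B m (D k B z p) := by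
  intro x hx
  exact hp _ (Submodule.mul_mem_mul hx (LinearMap.mem_ker.2 hz))

lemma lev_D' {m : ℕ} (z : B) {p : B →ₗ[k] k} (hp : Lev k B m p) :
    Lev k B m (D k B z p) := by
  intro x hx
  have h1 : Coalgebra.counit (R := k) (z - Coalgebra.counit (R := k) z • (1 : B)) = 0 := by
    simp
  have := lev_D h1 (lev_mono (Nat.le_succ m) hp) x hx
  rw [D_apply] at this ⊢
  have hx0 := hp x hx
  rw [mul_sub, mul_smul_comm, mul_one, map_sub, map_smul] at this
  simpa [hx0] using this

lemma D_add (z₁ z₂ : B) (p : B →ₗ[k] k) :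
    D k B (z₁ + z₂) p = D k B z₁ p + D k B z₂ p := by
  ext x; simp [D_apply, mul_add]

lemma D_sub_smul_one (z : B) (c : k) (p : B →ₗ[k] k) :
    D k B (z - c • 1) p = D k B z p - c • p := by
  ext x; simp [D_apply, mul_sub, mul_smul_comm]

set_option linter.unusedSectionVars false

noncomputable def wmap (g : B →ₗ[k] k) (y : B) : B :=
  (TensorProduct.rid k B) ((LinearMap.lTensor B g) (Coalgebra.comul y))

lemma counit_wmap (g : B →ₗ[k] k) (y : B) :
    Coalgebra.counit (R := k) (wmap g y) = g y := by
  have key : ∀ t : B ⊗[k] B,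
      Coalgebra.counit (R := k) ((TensorProduct.rid k B) ((LinearMap.lTensor B g) t)) =
      g ((TensorProduct.lid k B) ((LinearMap.rTensor B (Coalgebra.counit (R := k))) t)) := by
    intro t
    induction t using TensorProduct.induction_on with
    | zero => simp
    | tmul u v => simp [mul_comm]
    | add a b ha hb => simp [ha, hb]
  rw [wmap, key, Coalgebra.rTensor_counit_comul]
  simp

lemma conv_mulRight {g : B →ₗ[k] k} (hg : IsChar k B g) (p : B →ₗ[k] k) (y x : B) :
    conv k B p g (x * y) = conv k B (D k B (wmap g y) p) g x := by
  have key : ∀ a b : B ⊗[k] B,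
      LinearMap.mul' k k (TensorProduct.map p g (a * b)) =
      LinearMap.mul' k k (TensorProduct.map
        (D k B ((TensorProduct.rid k B) ((LinearMap.lTensor B g) b)) p) g a) := by
    intro a b
    induction b using TensorProduct.induction_on with
    | zero =>
        have h0 : D k B (0 : B) p = 0 := by ext u; simp [D_apply]
        simp [h0, TensorProduct.map_zero_left]
    | tmul s t =>
        induction a using TensorProduct.induction_on with
        | zero => simp
        | tmul u v =>
            simp [Algebra.TensorProduct.tmul_mul_tmul, D_apply, hg.2, mul_smul_comm]
            ring
        | add a₁ a₂ h₁ h₂ => simp [add_mul, h₁, h₂]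
    | add b₁ b₂ h₁ h₂ =>
        simp [mul_add, h₁, h₂, D_add, TensorProduct.map_add_left]
  show LinearMap.mul' k k (TensorProduct.map p g (Coalgebra.comul (x * y))) = _
  rw [Bialgebra.comul_mul]
  exact key _ _

lemma conv_counit (p : B →ₗ[k] k) : conv k B p (Coalgebra.counit) = p := by
  ext x
  have key : ∀ t : B ⊗[k] B,
      LinearMap.mul' k k (TensorProduct.map p (Coalgebra.counit (R := k)) t) =
      p ((TensorProduct.rid k B) ((LinearMap.lTensor B (Coalgebra.counit (R := k))) t)) := by
    intro t
    induction t using TensorProduct.induction_on with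
    | zero => simp
    | tmul u v => simp [mul_comm]
    | add a b ha hb => simp [ha, hb]
  show LinearMap.mul' k k (TensorProduct.map p _ (Coalgebra.comul x)) = p x
  rw [key, Coalgebra.lTensor_counit_comul]
  simp

lemma conv_assoc (f g h : B →ₗ[k] k) :
    conv k B (conv k B f g) h = conv k B f (conv k B g h) := by
  ext x
  have key1 : ∀ t : B ⊗[k] B,
      LinearMap.mul' k k (TensorProduct.map (conv k B f g) h t) =
      LinearMap.mul' k k (TensorProduct.map (LinearMap.mul' k k ∘ₗ TensorProduct.map f g) h
        ((LinearMap.rTensor B (Coalgebra.comul (R := k))) t)) := by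
    intro t
    induction t using TensorProduct.induction_on with
    | zero => simp
    | tmul u v => rfl
    | add a b ha hb => simp [ha, hb]
  have key2 : ∀ t : B ⊗[k] B,
      LinearMap.mul' k k (TensorProduct.map f (conv k B g h) t) =
      LinearMap.mul' k k (TensorProduct.map f (LinearMap.mul' k k ∘ₗ TensorProduct.map g h)
        ((LinearMap.lTensor B (Coalgebra.comul (R := k))) t)) := by
    intro t
    induction t using TensorProduct.induction_on with
    | zero => simp
    | tmul u v => rfl
    | add a b ha hb => simp [ha, hb]
  have key3 : ∀ s : (B ⊗[k] B) ⊗[k] B,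
      LinearMap.mul' k k (TensorProduct.map (LinearMap.mul' k k ∘ₗ TensorProduct.map f g) h s) =
      LinearMap.mul' k k (TensorProduct.map f (LinearMap.mul' k k ∘ₗ TensorProduct.map g h)
        ((TensorProduct.assoc k B B B) s)) := by
    intro s
    induction s using TensorProduct.induction_on with
    | zero => simp
    | tmul a w =>
        induction a using TensorProduct.induction_on with
        | zero => simp
        | tmul u v => simp [mul_assoc]
        | add a₁ a₂ h₁ h₂ =>
            simp only [TensorProduct.add_tmul, map_add] at h₁ h₂ ⊢
            rw [h₁, h₂]
    | add s₁ s₂ h₁ h₂ => simp [h₁, h₂]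
  show LinearMap.mul' k k (TensorProduct.map (conv k B f g) h (Coalgebra.comul x)) =
    LinearMap.mul' k k (TensorProduct.map f (conv k B g h) (Coalgebra.comul x))
  rw [key1, key2, ← Coalgebra.coassoc_apply, ← key3]

lemma conv_add_left (p q g : B →ₗ[k] k) :
    conv k B (p + q) g = conv k B p g + conv k B q g := by
  unfold conv
  rw [TensorProduct.map_add_left]
  ext x; simp

lemma conv_smul_left (c : k) (p g : B →ₗ[k] k) :
    conv k B (c • p) g = c • conv k B p g := by
  unfold conv
  rw [TensorProduct.map_smul_left]
  ext x; simp

lemma conv_zero_left (g : B →ₗ[k] k) : conv k B 0 g = 0 := by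
  unfold conv
  rw [TensorProduct.map_zero_left]
  ext x; simp

lemma conv_sub_smul (p : B →ₗ[k] k) (z : B) (c : k) {g : B →ₗ[k] k} (hg : IsChar k B g) :
    conv k B (D k B (z - c • 1) p) g = conv k B (D k B z p) g - c • conv k B p g := by
  have h1 : D k B (z - c • 1) p = D k B z p + (-c) • p := by
    rw [D_sub_smul_one]; module
  rw [h1, conv_add_left, conv_smul_left]
  module

lemma conv_cancel {g : B →ₗ[k] k} (hg : IsInvChar k B g) {p : B →ₗ[k] k}
    (h : conv k B p g = 0) : p = 0 := by
  obtain ⟨-, q, -, hq1, -⟩ := hg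
  have := conv_assoc p g q
  rw [h, conv_zero_left, hq1, conv_counit] at this
  exact this.symm

lemma exists_sep {f g : B →ₗ[k] k} (hf1 : f 1 = 1) (hg1 : g 1 = 1) (hne : f ≠ g) :
    ∃ y : B, Coalgebra.counit (R := k) y = 0 ∧ f y ≠ g y := by
  by_contra hc
  push_neg at hc
  apply hne
  ext x
  have h1 : Coalgebra.counit (R := k) (x - Coalgebra.counit (R := k) x • (1 : B)) = 0 := by simp
  have h2 := hc _ h1
  rw [map_sub, map_sub, map_smul, map_smul, hf1, hg1] at h2
  simpa using h2

/-- One elimination update preserves the vanishing of the sum. -/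
lemma update_rel (n : ℕ) (g : Fin n → (B →ₗ[k] k)) (hg : ∀ i, IsChar k B (g i))
    (p : Fin n → (B →ₗ[k] k)) (hsum : ∑ i, conv k B (p i) (g i) = 0) (y : B) (c : k) :
    ∑ i, conv k B (D k B (wmap (g i) y - c • 1) (p i)) (g i) = 0 := by
  have step : ∀ i, conv k B (D k B (wmap (g i) y - c • 1) (p i)) (g i) =
      (conv k B (p i) (g i)) ∘ₗ LinearMap.mulRight k y - c • conv k B (p i) (g i) := by
    intro i
    rw [conv_sub_smul _ _ _ (hg i)]
    congr 1
    ext x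
    exact (conv_mulRight (hg i) (p i) y x).symm
  rw [Finset.sum_congr rfl (fun i _ => step i), Finset.sum_sub_distrib, ← Finset.smul_sum, hsum]
  have h2 : ∑ i, (conv k B (p i) (g i)) ∘ₗ LinearMap.mulRight k y = 0 := by
    ext x
    have := LinearMap.congr_fun hsum (x * y)
    simpa using this
  rw [h2]
  simp

lemma D_zero_p (z : B) : D k B z (0 : B →ₗ[k] k) = 0 := by
  ext x; simp [D_apply]

lemma elimj (N n : ℕ) (g : Fin n → (B →ₗ[k] k)) (hg : ∀ i, IsChar k B (g i))
    (t j : Fin n) (hgne : g j ≠ g t) :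
    ∀ (m : ℕ) (p : Fin n → (B →ₗ[k] k)),
      (∑ i, conv k B (p i) (g i) = 0) → (∀ i, Lev k B (N + 1) (p i)) → Lev k B m (p j) →
      ∃ (q : Fin n → (B →ₗ[k] k)) (c : k) (r : B →ₗ[k] k),
        (∑ i, conv k B (q i) (g i) = 0) ∧ (∀ i, Lev k B (N + 1) (q i)) ∧
        q j = 0 ∧ (∀ i, p i = 0 → q i = 0) ∧
        c ≠ 0 ∧ Lev k B N r ∧ q t = c • p t + r := by
  intro m
  induction m with
  | zero =>
      intro p hsum hlev hj
      exact ⟨p, 1, 0, hsum, hlev, lev_zero hj, fun _ h => h, one_ne_zero, lev_zero_map N,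
        by simp⟩
  | succ m ih =>
      intro p hsum hlev hj
      obtain ⟨y, hy0, hysep⟩ := exists_sep (hg j).1 (hg t).1 hgne
      set c0 := g j y with hc0
      set p1 : Fin n → (B →ₗ[k] k) := fun i => D k B (wmap (g i) y - c0 • 1) (p i) with hp1
      have hrel1 : ∑ i, conv k B (p1 i) (g i) = 0 := update_rel n g hg p hsum y c0
      have hlev1 : ∀ i, Lev k B (N + 1) (p1 i) := fun i => lev_D' _ (hlev i)
      have hj1 : Lev k B m (p1 j) := by
        have hz : Coalgebra.counit (R := k) (wmap (g j) y - c0 • (1 : B)) = 0 := by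
          rw [map_sub, counit_wmap, map_smul]; simp [hc0]
        exact lev_D hz hj
      obtain ⟨q, c, r, hrelq, hlevq, hqj, hpres, hc, hr, hqt⟩ := ih p1 hrel1 hlev1 hj1
      set e := g t y - c0 with he
      have hee : e ≠ 0 := sub_ne_zero.2 (Ne.symm hysep)
      set z := wmap (g t) y - c0 • (1 : B) with hz
      have hsplit : p1 t = e • p t + D k B (z - e • 1) (p t) := by
        rw [D_sub_smul_one]
        show D k B z (p t) = _
        abel
      have hlow : Lev k B N (D k B (z - e • 1) (p t)) := by
        refine lev_D ?_ (hlev t)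
        rw [map_sub, hz, map_sub, counit_wmap, map_smul, map_smul]
        simp [he]
      refine ⟨q, c * e, c • D k B (z - e • 1) (p t) + r, hrelq, hlevq, hqj,
        fun i h => hpres i (by show D k B _ (p i) = 0; rw [h, D_zero_p]),
        mul_ne_zero hc hee, lev_add (lev_smul c hlow) hr, ?_⟩
      rw [hqt, hsplit]
      rw [smul_add, smul_smul, add_assoc]

lemma elimall (N n : ℕ) (g : Fin n → (B →ₗ[k] k)) (hg : ∀ i, IsChar k B (g i))
    (hdist : Function.Injective g) (t : Fin n) :
    ∀ (l : List (Fin n)), t ∉ l →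
    ∀ p : Fin n → (B →ₗ[k] k), (∑ i, conv k B (p i) (g i) = 0) →
      (∀ i, Lev k B (N + 1) (p i)) →
    ∃ (q : Fin n → (B →ₗ[k] k)) (c : k) (r : B →ₗ[k] k),
      (∑ i, conv k B (q i) (g i) = 0) ∧ (∀ i, Lev k B (N + 1) (q i)) ∧
      (∀ j ∈ l, q j = 0) ∧ (∀ i, p i = 0 → q i = 0) ∧
      c ≠ 0 ∧ Lev k B N r ∧ q t = c • p t + r := by
  intro l
  induction l with
  | nil =>
      intro _ p hsum hlev
      exact ⟨p, 1, 0, hsum, hlev, by simp, fun _ h => h, one_ne_zero, lev_zero_map N, by simp⟩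
  | cons j l' ih =>
      intro htl p hsum hlev
      rw [List.mem_cons] at htl
      push_neg at htl
      obtain ⟨htj, htl'⟩ := htl
      have hgne : g j ≠ g t := fun h => htj (hdist h).symm
      obtain ⟨q1, c1, r1, h1rel, h1lev, h1j, h1pres, hc1, hr1, h1t⟩ :=
        elimj N n g hg t j hgne (N + 1) p hsum hlev (hlev j)
      obtain ⟨q, c2, r2, hrel, hlev2, hzl, hpres, hc2, hr2, hqt⟩ :=
        ih htl' q1 h1rel h1lev
      refine ⟨q, c2 * c1, c2 • r1 + r2, hrel, hlev2, ?_, fun i h => hpres i (h1pres i h),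
        mul_ne_zero hc2 hc1, lev_add (lev_smul c2 hr1) hr2, ?_⟩
      · intro j' hj'
        rcases List.mem_cons.1 hj' with h | h
        · exact h ▸ hpres j h1j
        · exact hzl j' h
      · rw [hqt, h1t, smul_add, smul_smul, add_assoc]

lemma main (N : ℕ) : ∀ (n : ℕ) (g : Fin n → (B →ₗ[k] k)), (∀ i, IsInvChar k B (g i)) →
    Function.Injective g → ∀ p : Fin n → (B →ₗ[k] k), (∀ i, Lev k B N (p i)) →
    (∑ i, conv k B (p i) (g i) = 0) → ∀ i, p i = 0 := by
  induction N with
  | zero => intro n g _ _ p hp _ i; exact lev_zero (hp i)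
  | succ N ih =>
      intro n g hg hdist p hp hsum
      have hchar : ∀ i, IsChar k B (g i) := fun i => (hg i).1
      have key : ∀ s, Lev k B N (p s) := by
        intro s
        obtain ⟨q, c, r, hrel, hlev, hzl, hpres, hc, hr, hqt⟩ :=
          elimall N n g hchar hdist s ((Finset.univ.erase s).toList)
            (by simp) p hsum hp
        have hsingle : conv k B (q s) (g s) = 0 := by
          have hs : ∑ i, conv k B (q i) (g i) = conv k B (q s) (g s) :=
            Finset.sum_eq_single s
              (fun i _ hne => by
                rw [hzl i (by simp [Finset.mem_toList, hne]), conv_zero_left])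
              (fun h => absurd (Finset.mem_univ s) h)
          rw [← hs, hrel]
        have hq0 : q s = 0 := conv_cancel (hg s) hsingle
        intro x hx
        have hx0 : (c • p s + r) x = 0 := by rw [← hqt, hq0]; rfl
        rw [LinearMap.add_apply, LinearMap.smul_apply, hr x hx, add_zero, smul_eq_mul] at hx0
        exact (mul_eq_zero.mp hx0).resolve_left hc
      exact ih n g hg hdist p key hsum


end Aux

/-- **Theorem.** Let `k` be an integral domain and `B` a `k`-bialgebra.  Then the invertible
characters of `B` are left `B_∞^∨`-linearly independent: if `g 1, …, g n` are distinct
invertible characters and `p 1, …, p n ∈ B_∞^∨` satisfy `∑ i, p i ⊛ g i = 0`, then all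
`p i = 0`. -/
theorem stmt19 (n : ℕ) (g : Fin n → (B →ₗ[k] k)) (hg : ∀ i, IsInvChar k B (g i))
    (hdist : Function.Injective g) (p : Fin n → (B →ₗ[k] k))
    (hp : ∀ i, InDualInfty k B (p i))
    (hsum : ∑ i, conv k B (p i) (g i) = 0) :
    ∀ i, p i = 0 := by
  choose Nf hNf using hp
  have hlev : ∀ i, Lev k B (Finset.univ.sup Nf) (p i) := fun i =>
    lev_mono (Finset.le_sup (Finset.mem_univ i)) (hNf i)
  exact main _ n g hg hdist p hlev hsum
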